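/- Let N ≥ 1 UEs have one-way propagation delays τ_1, …, τ_N > 0 to the satellite, let τ_M = max_i τ_i and τ_m = min_i τ_i, let t_UL ≥ 0 be the uplink slot duration, and set T_th = 2(τ_M − τ_m) + t_UL. Suppose a downlink transmission ends at satellite time t_0, and each UE i, applying timing advance, transmits its uplink slot during the interval [t_0 + τ_i + 2(τ_M − τ_i), t_0 + τ_i + 2(τ_M − τ_i) + t_UL]. Then for every UE i and every additional downlink slot transmitted by the satellite at any time t with t ≥ t_0 + T_th, the reception time t + τ_i of the additional downlink slot at UE i satisfies t + τ_i ≥ t_0 + τ_i + 2(τ_M − τ_i) + t_UL; that is, the additional downlink slot arrives at every UE no earlier than the end of that UE's uplink transmission, so it creates no interference (Lemma 1). -/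
import Mathlib


/-- **Lemma 1 (ESSA non-interference).**
`N ≥ 1` UEs have one-way propagation delays `τ i > 0`; `τM` and `τm` are the
maximum and minimum delays; `tUL ≥ 0` is the uplink slot duration and
`Tth = 2(τM − τm) + tUL`.  A downlink transmission ends at satellite time `t0`,
and UE `i` (applying timing advance) transmits its uplink slot during
`[t0 + τ i + 2(τM − τ i), t0 + τ i + 2(τM − τ i) + tUL]`.  Then any additional
downlink slot transmitted by the satellite at a time `t ≥ t0 + Tth` is received
by every UE `i` at time `t + τ i` no earlier than the end of that UE's uplink
transmission. -/
theorem essa_no_interference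
    (N : ℕ) (hN : 1 ≤ N) (τ : Fin N → ℝ) (hτpos : ∀ i, 0 < τ i)
    (τM τm : ℝ)
    (hτM : IsGreatest (Set.range τ) τM)
    (hτm : IsLeast (Set.range τ) τm)
    (tUL : ℝ) (htUL : 0 ≤ tUL)
    (Tth : ℝ) (hTth : Tth = 2 * (τM - τm) + tUL)
    (t0 : ℝ) :
    ∀ (i : Fin N) (t : ℝ), t0 + Tth ≤ t →
      t0 + τ i + 2 * (τM - τ i) + tUL ≤ t + τ i := by
  intro i t ht
  have hmi : τm ≤ τ i := hτm.2 ⟨i, rfl⟩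
  linarith [hTth ▸ ht]
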